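/- arXiv:math/9607210 — 3 statements merged into one kernel-verified Lean document; each statement's English description precedes it below -/
import Mathlib

section
/- For any two closed, convex, origin-symmetric sets A, B in ℝⁿ, μₙ(A)·μₙ(B) ≤ 2^{n/2} · μₙ(A∩B). -/
open MeasureTheory Real
noncomputable def stdGaussian (n : ℕ) : Measure (EuclideanSpace ℝ (Fin n)) :=
  volume.withDensity fun x => ENNReal.ofReal ((2 * π) ^ (-(n : ℝ) / 2) * Real.exp (-‖x‖ ^ 2 / 2))

open Set
open scoped ENNReal NNReal Pointwise

lemma ennreal_amgm (a b : ℝ≥0∞) : 4 * (a * b) ≤ (a + b) ^ 2 := by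
  rcases eq_or_ne a ⊤ with ha | ha
  · rcases eq_or_ne b 0 with hb | hb
    · simp [hb]
    · rw [ha, top_add, ENNReal.top_pow (by norm_num)]; exact le_top
  rcases eq_or_ne b ⊤ with hb | hb
  · rcases eq_or_ne a 0 with ha0 | ha0
    · simp [ha0]
    · rw [hb, add_top, ENNReal.top_pow (by norm_num)]; exact le_top
  lift a to ℝ≥0 using ha
  lift b to ℝ≥0 using hb
  have h4 : (4 : ℝ≥0∞) = ((4 : ℝ≥0) : ℝ≥0∞) := by norm_num
  rw [h4, ← ENNReal.coe_mul, ← ENNReal.coe_mul, ← ENNReal.coe_add, ← ENNReal.coe_pow,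
    ENNReal.coe_le_coe, ← NNReal.coe_le_coe]
  push_cast
  nlinarith [sq_nonneg ((a : ℝ) - b), NNReal.coe_nonneg a, NNReal.coe_nonneg b]

lemma sumset_one_dim {X Y Z : Set ℝ} (hX : MeasurableSet X) (hY : MeasurableSet Y)
    (hXne : X.Nonempty) (hYne : Y.Nonempty)
    (hmid : ∀ x ∈ X, ∀ y ∈ Y, (x + y) / 2 ∈ Z) :
    volume X + volume Y ≤ 2 * volume Z := by
  have key : ∀ K L : Set ℝ, IsCompact K → IsCompact L → K.Nonempty → L.Nonempty →
      K ⊆ X → L ⊆ Y → volume K + volume L ≤ 2 * volume Z := by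
    intro K L hK hL hKne hLne hKX hLY
    set k := sSup K with hk
    set l := sInf L with hl
    have hkK : k ∈ K := hK.sSup_mem hKne
    have hlL : l ∈ L := hL.sInf_mem hLne
    set P : Set ℝ := (fun x => (x + l) / 2) '' K with hP
    set Q : Set ℝ := (fun y => (k + y) / 2) '' L with hQ
    have hPZ : P ⊆ Z := by
      rintro _ ⟨x, hx, rfl⟩; exact hmid x (hKX hx) l (hLY hlL)
    have hQZ : Q ⊆ Z := by
      rintro _ ⟨y, hy, rfl⟩; exact hmid k (hKX hkK) y (hLY hy)
    have hPc : IsCompact P := hK.image (by continuity)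
    have hQc : IsCompact Q := hL.image (by continuity)
    have hPIic : P ⊆ Iic ((k + l) / 2) := by
      rintro _ ⟨x, hx, rfl⟩
      have : x ≤ k := le_csSup hK.bddAbove hx
      simp only [mem_Iic]; linarith
    have hQIci : Q ⊆ Ici ((k + l) / 2) := by
      rintro _ ⟨y, hy, rfl⟩
      have : l ≤ y := csInf_le hL.bddBelow hy
      simp only [mem_Ici]; linarith
    have hinter : volume (P ∩ Q) = 0 := by
      have : P ∩ Q ⊆ {(k + l) / 2} := by
        rintro z ⟨hzP, hzQ⟩
        have h1 := hPIic hzP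
        have h2 := hQIci hzQ
        simp only [mem_Iic] at h1
        simp only [mem_Ici] at h2
        simp only [mem_singleton_iff]; linarith
      exact measure_mono_null this (measure_singleton _)
    have hPvol : volume P = ENNReal.ofReal (1/2) * volume K := by
      have hPeq : P = ((l/2) +ᵥ ((1/2 : ℝ) • K) : Set ℝ) := by
        ext z
        simp only [hP, mem_image, Set.mem_vadd_set, mem_smul_set, vadd_eq_add, smul_eq_mul]
        constructor
        · rintro ⟨x, hx, rfl⟩; exact ⟨x/2, ⟨x, hx, by ring⟩, by ring⟩
        · rintro ⟨_, ⟨x, hx, rfl⟩, rfl⟩; exact ⟨x, hx, by ring⟩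
      rw [hPeq, measure_vadd, Measure.addHaar_smul]
      norm_num [abs_of_nonneg]
    have hQvol : volume Q = ENNReal.ofReal (1/2) * volume L := by
      have hQeq : Q = ((k/2) +ᵥ ((1/2 : ℝ) • L) : Set ℝ) := by
        ext z
        simp only [hQ, mem_image, Set.mem_vadd_set, mem_smul_set, vadd_eq_add, smul_eq_mul]
        constructor
        · rintro ⟨y, hy, rfl⟩; exact ⟨y/2, ⟨y, hy, by ring⟩, by ring⟩
        · rintro ⟨_, ⟨y, hy, rfl⟩, rfl⟩; exact ⟨y, hy, by ring⟩
      rw [hQeq, measure_vadd, Measure.addHaar_smul]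
      norm_num [abs_of_nonneg]
    have hsum : volume P + volume Q ≤ volume Z := by
      have heq := measure_union_add_inter (μ := volume) P hQc.isClosed.measurableSet
      have hle : volume (P ∪ Q) ≤ volume Z := measure_mono (union_subset hPZ hQZ)
      calc volume P + volume Q = volume (P ∪ Q) + volume (P ∩ Q) := heq.symm
        _ = volume (P ∪ Q) := by rw [hinter, add_zero]
        _ ≤ volume Z := hle
    have h2 : (2 : ℝ≥0∞) * ENNReal.ofReal (1/2) = 1 := by
      rw [← ENNReal.ofReal_ofNat, ← ENNReal.ofReal_mul (by norm_num)]
      norm_num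
    calc volume K + volume L
        = 2 * (ENNReal.ofReal (1/2) * volume K + ENNReal.ofReal (1/2) * volume L) := by
          rw [mul_add, ← mul_assoc, ← mul_assoc, h2, one_mul, one_mul]
      _ = 2 * (volume P + volume Q) := by rw [hPvol, hQvol]
      _ ≤ 2 * volume Z := mul_le_mul_right hsum 2
  refine le_of_forall_lt fun c hc => ?_
  have hne : ∀ {S : Set ℝ} {r : ℝ≥0∞}, r < volume S → S.Nonempty := by
    intro S r h
    rcases S.eq_empty_or_nonempty with rfl | hS
    · exfalso; simpa using h
    · exact hS
  rcases eq_or_ne (volume X) 0 with hX0 | hX0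
  · rw [hX0, zero_add] at hc
    obtain ⟨L, hLY, hLc, hcL⟩ := hY.exists_lt_isCompact hc
    have := key {hXne.some} L isCompact_singleton hLc ⟨_, rfl⟩ (hne hcL)
      (singleton_subset_iff.2 hXne.some_mem) hLY
    exact lt_of_lt_of_le (hcL.trans_le le_add_self) this
  rcases eq_or_ne (volume Y) 0 with hY0 | hY0
  · rw [hY0, add_zero] at hc
    obtain ⟨K, hKX, hKc, hcK⟩ := hX.exists_lt_isCompact hc
    have := key K {hYne.some} hKc isCompact_singleton (hne hcK) ⟨_, rfl⟩ hKX
      (singleton_subset_iff.2 hYne.some_mem)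
    exact lt_of_lt_of_le (hcK.trans_le le_self_add) this
  obtain ⟨r₁, hr₁, r₂, hr₂, hcr⟩ := ENNReal.exists_lt_add_of_lt_add hc hX0 hY0
  obtain ⟨K, hKX, hKc, hcK⟩ := hX.exists_lt_isCompact hr₁
  obtain ⟨L, hLY, hLc, hcL⟩ := hY.exists_lt_isCompact hr₂
  have hKL := key K L hKc hLc (hne hcK) (hne hcL) hKX hLY
  calc c < r₁ + r₂ := hcr
    _ ≤ volume K + volume L := add_le_add hcK.le hcL.le
    _ ≤ 2 * volume Z := hKL

lemma scale_lintegral {w : ℝ → ℝ≥0∞} (hw : Measurable w) {c : ℝ} (hc : 0 < c) :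
    ∫⁻ t in Ioi (0:ℝ), w (c * t) = ENNReal.ofReal c⁻¹ * ∫⁻ s in Ioi (0:ℝ), w s := by
  have h1 : ∫⁻ t in Ioi (0:ℝ), w (c * t) = ∫⁻ t, (Ioi (0:ℝ)).indicator w (c * t) := by
    rw [← lintegral_indicator measurableSet_Ioi]
    congr 1
    ext t
    by_cases ht : t ∈ Ioi (0:ℝ)
    · rw [indicator_of_mem ht, indicator_of_mem (by simpa using mul_pos hc ht)]
    · rw [indicator_of_notMem ht, indicator_of_notMem]
      simp only [mem_Ioi, not_lt] at ht ⊢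
      exact mul_nonpos_of_nonneg_of_nonpos hc.le ht
  rw [h1, ← lintegral_map (hw.indicator measurableSet_Ioi) (measurable_const_mul c),
    Real.map_volume_mul_left (ne_of_gt hc), lintegral_smul_measure,
    lintegral_indicator measurableSet_Ioi, abs_of_pos (inv_pos.2 hc), smul_eq_mul]

-- bounded case of 1D Prekopa-Leindler (t = 1/2, multiplicative form)
lemma PL1_bounded {f g h : ℝ → ℝ≥0∞} (hf : Measurable f) (hg : Measurable g)
    (hh : Measurable h) {M : ℝ≥0∞} (hM : M ≠ ⊤) (hfb : ∀ x, f x ≤ M) (hgb : ∀ x, g x ≤ M)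
    (hyp : ∀ x y, f x * g y ≤ (h ((x + y) / 2)) ^ 2) :
    (∫⁻ x, f x) * (∫⁻ y, g y) ≤ (∫⁻ z, h z) ^ 2 := by
  -- trivial cases
  rcases eq_or_ne (∫⁻ z, h z) ⊤ with hht | hht
  · rw [hht, ENNReal.top_pow (by norm_num)]; exact le_top
  rcases eq_or_ne (∫⁻ x, f x) 0 with hf0 | hf0
  · rw [hf0, zero_mul]; exact zero_le
  rcases eq_or_ne (∫⁻ y, g y) 0 with hg0 | hg0
  · rw [hg0, mul_zero]; exact zero_le
  have hfin : ∀ᵐ z, h z < ⊤ := ae_lt_top hh hht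
  -- sups
  set sF : ℝ≥0∞ := ⨆ x, f x with hsF
  set sG : ℝ≥0∞ := ⨆ y, g y with hsG
  have hsFM : sF ≤ M := iSup_le hfb
  have hsGM : sG ≤ M := iSup_le hgb
  have hsFtop : sF ≠ ⊤ := fun hc => hM (top_le_iff.1 (hc ▸ hsFM))
  have hsGtop : sG ≠ ⊤ := fun hc => hM (top_le_iff.1 (hc ▸ hsGM))
  have hsF0 : sF ≠ 0 := by
    intro hc
    apply hf0
    have : ∀ x, f x = 0 := fun x => le_antisymm (hc ▸ le_iSup f x) (zero_le)
    simp [this]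
  have hsG0 : sG ≠ 0 := by
    intro hc
    apply hg0
    have : ∀ y, g y = 0 := fun y => le_antisymm (hc ▸ le_iSup g y) (zero_le)
    simp [this]
  set σ₁ : ℝ := sF.toReal with hσ₁
  set σ₂ : ℝ := sG.toReal with hσ₂
  have hσ₁pos : 0 < σ₁ := ENNReal.toReal_pos hsF0 hsFtop
  have hσ₂pos : 0 < σ₂ := ENNReal.toReal_pos hsG0 hsGtop
  set c : ℝ := Real.sqrt (σ₁ * σ₂) with hc
  have hcpos : 0 < c := Real.sqrt_pos.2 (mul_pos hσ₁pos hσ₂pos)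
  have hcsq : c ^ 2 = σ₁ * σ₂ := Real.sq_sqrt (mul_pos hσ₁pos hσ₂pos).le
  -- level set functions
  set wf : ℝ → ℝ≥0∞ := fun t => volume {x | ENNReal.ofReal t < f x} with hwf
  set wg : ℝ → ℝ≥0∞ := fun t => volume {y | ENNReal.ofReal t < g y} with hwg
  set wh : ℝ → ℝ≥0∞ := fun t => volume {z | ENNReal.ofReal t < h z} with hwh
  have hwf_anti : Antitone wf := fun s t hst =>
    measure_mono (fun x hx => lt_of_le_of_lt (ENNReal.ofReal_le_ofReal hst) hx)
  have hwg_anti : Antitone wg := fun s t hst =>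
    measure_mono (fun x hx => lt_of_le_of_lt (ENNReal.ofReal_le_ofReal hst) hx)
  have hwh_anti : Antitone wh := fun s t hst =>
    measure_mono (fun x hx => lt_of_le_of_lt (ENNReal.ofReal_le_ofReal hst) hx)
  have hwf_meas : Measurable wf := hwf_anti.measurable
  have hwg_meas : Measurable wg := hwg_anti.measurable
  have hwh_meas : Measurable wh := hwh_anti.measurable
  -- layer cake for f
  have hftop : ∀ x, f x ≠ ⊤ := fun x => fun hc => hM (top_le_iff.1 (hc ▸ hfb x))
  have hgtop : ∀ y, g y ≠ ⊤ := fun y => fun hc => hM (top_le_iff.1 (hc ▸ hgb y))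
  have layer_f : ∫⁻ x, f x = ∫⁻ t in Ioi (0:ℝ), wf t := by
    have h1 : ∫⁻ x, f x = ∫⁻ x, ENNReal.ofReal ((f x).toReal) := by
      congr 1; ext x; rw [ENNReal.ofReal_toReal (hftop x)]
    rw [h1, lintegral_eq_lintegral_meas_lt volume (Filter.Eventually.of_forall fun x => ENNReal.toReal_nonneg)
      (hf.ennreal_toReal.aemeasurable)]
    refine setLIntegral_congr_fun measurableSet_Ioi (fun t ht => ?_)
    congr 1
    ext x
    simp only [mem_setOf_eq]
    rw [ENNReal.ofReal_lt_iff_lt_toReal (le_of_lt ht) (hftop x)]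
  have layer_g : ∫⁻ y, g y = ∫⁻ t in Ioi (0:ℝ), wg t := by
    have h1 : ∫⁻ y, g y = ∫⁻ y, ENNReal.ofReal ((g y).toReal) := by
      congr 1; ext y; rw [ENNReal.ofReal_toReal (hgtop y)]
    rw [h1, lintegral_eq_lintegral_meas_lt volume (Filter.Eventually.of_forall fun y => ENNReal.toReal_nonneg)
      (hg.ennreal_toReal.aemeasurable)]
    refine setLIntegral_congr_fun measurableSet_Ioi (fun t ht => ?_)
    congr 1
    ext y
    simp only [mem_setOf_eq]
    rw [ENNReal.ofReal_lt_iff_lt_toReal (le_of_lt ht) (hgtop y)]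
  have layer_h : ∫⁻ z, h z = ∫⁻ t in Ioi (0:ℝ), wh t := by
    have h1 : ∫⁻ z, h z = ∫⁻ z, ENNReal.ofReal ((h z).toReal) := by
      apply lintegral_congr_ae
      filter_upwards [hfin] with z hz
      rw [ENNReal.ofReal_toReal hz.ne]
    rw [h1, lintegral_eq_lintegral_meas_lt volume (Filter.Eventually.of_forall fun z => ENNReal.toReal_nonneg)
      (hh.ennreal_toReal.aemeasurable)]
    refine setLIntegral_congr_fun measurableSet_Ioi (fun t ht => ?_)
    -- here only a.e. equality of the sets
    apply measure_congr
    filter_upwards [hfin] with z hz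
    change (t < (h z).toReal) = (ENNReal.ofReal t < h z)
    rw [eq_iff_iff, ← ENNReal.ofReal_lt_iff_lt_toReal (le_of_lt ht) hz.ne]
  -- pointwise level-set inequality
  have key : ∀ t ∈ Ioi (0:ℝ), wf (σ₁ * t) + wg (σ₂ * t) ≤ 2 * wh (c * t) := by
    intro t ht
    simp only [mem_Ioi] at ht
    rcases le_or_gt 1 t with ht1 | ht1
    · have hXempty : {x | ENNReal.ofReal (σ₁ * t) < f x} = ∅ := by
        ext x
        simp only [mem_setOf_eq, mem_empty_iff_false, iff_false, not_lt]
        calc f x ≤ sF := le_iSup f x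
          _ = ENNReal.ofReal σ₁ := (ENNReal.ofReal_toReal hsFtop).symm
          _ ≤ ENNReal.ofReal (σ₁ * t) := ENNReal.ofReal_le_ofReal (by nlinarith)
      have hYempty : {y | ENNReal.ofReal (σ₂ * t) < g y} = ∅ := by
        ext y
        simp only [mem_setOf_eq, mem_empty_iff_false, iff_false, not_lt]
        calc g y ≤ sG := le_iSup g y
          _ = ENNReal.ofReal σ₂ := (ENNReal.ofReal_toReal hsGtop).symm
          _ ≤ ENNReal.ofReal (σ₂ * t) := ENNReal.ofReal_le_ofReal (by nlinarith)
      simp only [hwf, hwg, hXempty, hYempty, measure_empty, add_zero]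
      exact zero_le
    · -- t < 1 : sets nonempty, use sumset lemma
      have hXne : {x | ENNReal.ofReal (σ₁ * t) < f x}.Nonempty := by
        have : ENNReal.ofReal (σ₁ * t) < sF := by
          calc ENNReal.ofReal (σ₁ * t) < ENNReal.ofReal σ₁ :=
            ENNReal.ofReal_lt_ofReal_iff hσ₁pos |>.2 (by nlinarith)
          _ = sF := ENNReal.ofReal_toReal hsFtop
        rw [hsF, lt_iSup_iff] at this
        obtain ⟨x, hx⟩ := this
        exact ⟨x, hx⟩
      have hYne : {y | ENNReal.ofReal (σ₂ * t) < g y}.Nonempty := by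
        have : ENNReal.ofReal (σ₂ * t) < sG := by
          calc ENNReal.ofReal (σ₂ * t) < ENNReal.ofReal σ₂ :=
            ENNReal.ofReal_lt_ofReal_iff hσ₂pos |>.2 (by nlinarith)
          _ = sG := ENNReal.ofReal_toReal hsGtop
        rw [hsG, lt_iSup_iff] at this
        obtain ⟨y, hy⟩ := this
        exact ⟨y, hy⟩
      have hmid : ∀ x ∈ {x | ENNReal.ofReal (σ₁ * t) < f x},
          ∀ y ∈ {y | ENNReal.ofReal (σ₂ * t) < g y}, (x + y) / 2 ∈ {z | ENNReal.ofReal (c * t) < h z} := by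
        intro x hx y hy
        simp only [mem_setOf_eq] at hx hy ⊢
        have hprod : ENNReal.ofReal (c * t) ^ 2 < f x * g y := by
          have h1 : ENNReal.ofReal (c * t) ^ 2 = ENNReal.ofReal (σ₁ * t) * ENNReal.ofReal (σ₂ * t) := by
            rw [← ENNReal.ofReal_mul (by positivity), sq, ← ENNReal.ofReal_mul (by positivity)]
            congr 1
            linear_combination t ^ 2 * hcsq
          rw [h1]
          exact ENNReal.mul_lt_mul hx hy
        by_contra hcon
        push_neg at hcon
        have : (h ((x+y)/2)) ^ 2 ≤ ENNReal.ofReal (c * t) ^ 2 := pow_le_pow_left' hcon 2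
        exact absurd ((hyp x y).trans this) (not_le.2 hprod)
      have hXm : MeasurableSet {x | ENNReal.ofReal (σ₁ * t) < f x} := hf measurableSet_Ioi
      have hYm : MeasurableSet {y | ENNReal.ofReal (σ₂ * t) < g y} := hg measurableSet_Ioi
      exact sumset_one_dim hXm hYm hXne hYne hmid
  -- integrate the key inequality
  have int_key : (∫⁻ t in Ioi (0:ℝ), wf (σ₁ * t)) + (∫⁻ t in Ioi (0:ℝ), wg (σ₂ * t))
      ≤ 2 * ∫⁻ t in Ioi (0:ℝ), wh (c * t) := by
    have m1 : Measurable fun t : ℝ => wf (σ₁ * t) := hwf_meas.comp (measurable_const_mul σ₁)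
    have m3 : Measurable fun t : ℝ => wh (c * t) := hwh_meas.comp (measurable_const_mul c)
    rw [← lintegral_add_left m1, ← lintegral_const_mul 2 m3]
    exact setLIntegral_mono (by fun_prop) (fun t ht => key t ht)
  rw [scale_lintegral hwf_meas hσ₁pos, scale_lintegral hwg_meas hσ₂pos,
    scale_lintegral hwh_meas hcpos, ← layer_f, ← layer_g, ← layer_h] at int_key
  -- final algebra
  set A := ENNReal.ofReal σ₁⁻¹ * ∫⁻ x, f x with hA
  set B := ENNReal.ofReal σ₂⁻¹ * ∫⁻ y, g y with hB
  set D := ENNReal.ofReal c⁻¹ * ∫⁻ z, h z with hD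
  have hAB : A + B ≤ 2 * D := int_key
  have h4 : 4 * (A * B) ≤ 4 * D ^ 2 := by
    calc 4 * (A * B) ≤ (A + B) ^ 2 := ennreal_amgm A B
      _ ≤ (2 * D) ^ 2 := pow_le_pow_left' hAB 2
      _ = 4 * D ^ 2 := by ring
  have hABD : A * B ≤ D ^ 2 := by
    have := (ENNReal.mul_le_mul_iff_right (a := 4) (by norm_num) (by norm_num)).1 h4
    exact this
  -- multiply both sides by ofReal σ₁ * ofReal σ₂
  have expand : ENNReal.ofReal σ₁ * ENNReal.ofReal σ₂ * (A * B)
      = (∫⁻ x, f x) * ∫⁻ y, g y := by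
    rw [hA, hB]
    rw [show ENNReal.ofReal σ₁ * ENNReal.ofReal σ₂ * (ENNReal.ofReal σ₁⁻¹ * (∫⁻ x, f x) * (ENNReal.ofReal σ₂⁻¹ * ∫⁻ y, g y))
      = (ENNReal.ofReal σ₁ * ENNReal.ofReal σ₁⁻¹) * (ENNReal.ofReal σ₂ * ENNReal.ofReal σ₂⁻¹) * ((∫⁻ x, f x) * ∫⁻ y, g y) by ring]
    rw [← ENNReal.ofReal_mul hσ₁pos.le, ← ENNReal.ofReal_mul hσ₂pos.le,
      mul_inv_cancel₀ (ne_of_gt hσ₁pos), mul_inv_cancel₀ (ne_of_gt hσ₂pos)]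
    simp
  have expand2 : ENNReal.ofReal σ₁ * ENNReal.ofReal σ₂ * D ^ 2 = (∫⁻ z, h z) ^ 2 := by
    rw [hD, mul_pow]
    rw [show ENNReal.ofReal σ₁ * ENNReal.ofReal σ₂ * (ENNReal.ofReal c⁻¹ ^ 2 * (∫⁻ z, h z) ^ 2)
      = (ENNReal.ofReal σ₁ * ENNReal.ofReal σ₂ * ENNReal.ofReal c⁻¹ ^ 2) * (∫⁻ z, h z) ^ 2 by ring]
    have : ENNReal.ofReal σ₁ * ENNReal.ofReal σ₂ * ENNReal.ofReal c⁻¹ ^ 2 = 1 := by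
      rw [← ENNReal.ofReal_mul hσ₁pos.le, ← ENNReal.ofReal_pow (by positivity),
        ← ENNReal.ofReal_mul (by positivity)]
      rw [show σ₁ * σ₂ * c⁻¹ ^ 2 = (σ₁ * σ₂) * (c^2)⁻¹ by ring, hcsq,
        mul_inv_cancel₀ (by positivity)]
      simp
    rw [this, one_mul]
  calc (∫⁻ x, f x) * ∫⁻ y, g y = ENNReal.ofReal σ₁ * ENNReal.ofReal σ₂ * (A * B) := expand.symm
    _ ≤ ENNReal.ofReal σ₁ * ENNReal.ofReal σ₂ * D ^ 2 := mul_le_mul_right hABD _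
    _ = (∫⁻ z, h z) ^ 2 := expand2

lemma isup_min_nat (a : ℝ≥0∞) : ⨆ m : ℕ, min a m = a := by
  apply le_antisymm (iSup_le fun m => min_le_left _ _)
  rcases eq_or_ne a ⊤ with ha | ha
  · have : ∀ m : ℕ, min a (m : ℝ≥0∞) = m := fun m => by simp [ha]
    calc a ≤ ⨆ m : ℕ, (m : ℝ≥0∞) := by rw [ENNReal.iSup_natCast]; exact le_top
      _ = ⨆ m : ℕ, min a m := by simp_rw [this]
  · obtain ⟨m, hm⟩ := ENNReal.exists_nat_gt ha
    calc a = min a m := (min_eq_left hm.le).symm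
      _ ≤ ⨆ m : ℕ, min a m := le_iSup (fun m : ℕ => min a (m:ℝ≥0∞)) m

lemma PL1 {f g h : ℝ → ℝ≥0∞} (hf : Measurable f) (hg : Measurable g) (hh : Measurable h)
    (hyp : ∀ x y, f x * g y ≤ (h ((x + y) / 2)) ^ 2) :
    (∫⁻ x, f x) * (∫⁻ y, g y) ≤ (∫⁻ z, h z) ^ 2 := by
  have htrunc : ∀ m k : ℕ, (∫⁻ x, min (f x) m) * (∫⁻ y, min (g y) k) ≤ (∫⁻ z, h z) ^ 2 := by
    intro m k
    refine PL1_bounded (M := ((max m k : ℕ) : ℝ≥0∞)) (hf.min measurable_const)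
      (hg.min measurable_const) hh (ENNReal.natCast_ne_top _) (fun x => ?_) (fun y => ?_)
      (fun x y => ?_)
    · exact (min_le_right _ _).trans (Nat.cast_le.2 (le_max_left _ _))
    · exact (min_le_right _ _).trans (Nat.cast_le.2 (le_max_right _ _))
    · exact (mul_le_mul' (min_le_left _ _) (min_le_left _ _)).trans (hyp x y)
  have eqf : ∫⁻ x, f x = ⨆ m : ℕ, ∫⁻ x, min (f x) m := by
    rw [← lintegral_iSup (fun m => hf.min measurable_const)
      (fun m k hmk x => min_le_min le_rfl (Nat.cast_le.2 hmk))]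
    congr 1; ext x; exact (isup_min_nat (f x)).symm
  have eqg : ∫⁻ y, g y = ⨆ k : ℕ, ∫⁻ y, min (g y) k := by
    rw [← lintegral_iSup (fun k => hg.min measurable_const)
      (fun m k hmk y => min_le_min le_rfl (Nat.cast_le.2 hmk))]
    congr 1; ext y; exact (isup_min_nat (g y)).symm
  rw [eqf, eqg, ENNReal.iSup_mul]
  refine iSup_le fun m => ?_
  rw [ENNReal.mul_iSup]
  exact iSup_le fun k => htrunc m k

lemma fin_cons_add {n : ℕ} (a b : ℝ) (x y : Fin n → ℝ) :
    (Fin.cons a x : Fin (n+1) → ℝ) + Fin.cons b y = Fin.cons (a + b) (x + y) := by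
  funext i
  refine Fin.cases ?_ (fun j => ?_) i <;> simp

lemma fin_cons_smul {n : ℕ} (c a : ℝ) (x : Fin n → ℝ) :
    c • (Fin.cons a x : Fin (n+1) → ℝ) = Fin.cons (c • a) (c • x) := by
  funext i
  refine Fin.cases ?_ (fun j => ?_) i <;> simp

lemma PLpi : ∀ n : ℕ, ∀ f g h : (Fin n → ℝ) → ℝ≥0∞, Measurable f → Measurable g → Measurable h →
    (∀ x y, f x * g y ≤ (h ((1/2 : ℝ) • (x + y))) ^ 2) →
    (∫⁻ x, f x) * (∫⁻ y, g y) ≤ (∫⁻ z, h z) ^ 2 := by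
  intro n
  induction n with
  | zero =>
    intro f g h hf hg hh hyp
    have huniv : (volume : Measure (Fin 0 → ℝ)) univ = 1 := by
      rw [volume_pi, Measure.pi_univ]; simp
    have hconst : ∀ (F : (Fin 0 → ℝ) → ℝ≥0∞), ∫⁻ x, F x = F default := by
      intro F
      have : F = fun _ => F default := funext fun x => by rw [Subsingleton.elim x default]
      rw [this, lintegral_const, huniv, mul_one]
    rw [hconst f, hconst g, hconst h]
    have := hyp default default
    rwa [Subsingleton.elim ((1/2 : ℝ) • (default + default)) (default : Fin 0 → ℝ)] at this
  | succ n ih =>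
    intro f g h hf hg hh hyp
    set e := MeasurableEquiv.piFinSuccAbove (fun _ : Fin (n+1) => ℝ) 0 with he
    have hmp : MeasurePreserving e volume volume := volume_preserving_piFinSuccAbove _ 0
    have hsymm : ∀ p : ℝ × (Fin n → ℝ), e.symm p = Fin.cons p.1 p.2 := by
      intro p
      simp [he, MeasurableEquiv.piFinSuccAbove_symm_apply, Fin.insertNthEquiv, Fin.insertNth_zero]
    set F : ℝ × (Fin n → ℝ) → ℝ≥0∞ := fun p => f (e.symm p) with hF
    set G : ℝ × (Fin n → ℝ) → ℝ≥0∞ := fun p => g (e.symm p) with hG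
    set H : ℝ × (Fin n → ℝ) → ℝ≥0∞ := fun p => h (e.symm p) with hH
    have hFm : Measurable F := hf.comp e.symm.measurable
    have hGm : Measurable G := hg.comp e.symm.measurable
    have hHm : Measurable H := hh.comp e.symm.measurable
    have transfer : ∀ (φ : (Fin (n+1) → ℝ) → ℝ≥0∞), Measurable φ →
        ∫⁻ x, φ x = ∫⁻ p : ℝ × (Fin n → ℝ), φ (e.symm p) := by
      intro φ hφ
      exact ((hmp.symm e).lintegral_comp hφ).symm
    set F2 : ℝ → ℝ≥0∞ := fun a => ∫⁻ x, F (a, x) with hF2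
    set G2 : ℝ → ℝ≥0∞ := fun b => ∫⁻ y, G (b, y) with hG2
    set H2 : ℝ → ℝ≥0∞ := fun d => ∫⁻ z, H (d, z) with hH2
    have hF2m : Measurable F2 := by
      apply Measurable.lintegral_prod_right (f := fun a x => F (a, x))
      exact hFm.comp measurable_id
    have hG2m : Measurable G2 := by
      apply Measurable.lintegral_prod_right (f := fun a x => G (a, x))
      exact hGm.comp measurable_id
    have hH2m : Measurable H2 := by
      apply Measurable.lintegral_prod_right (f := fun a x => H (a, x))
      exact hHm.comp measurable_id
    have key : ∀ a b : ℝ, F2 a * G2 b ≤ (H2 ((a + b) / 2)) ^ 2 := by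
      intro a b
      refine ih (fun x => F (a, x)) (fun y => G (b, y)) (fun z => H ((a + b) / 2, z))
        (hFm.comp (measurable_prodMk_left)) (hGm.comp (measurable_prodMk_left))
        (hHm.comp (measurable_prodMk_left)) (fun x y => ?_)
      have := hyp (Fin.cons a x) (Fin.cons b y)
      rw [fin_cons_add, fin_cons_smul] at this
      simp only [hF, hG, hH, hsymm]
      convert this using 4
      · simp [smul_eq_mul]; ring
    have final := PL1 hF2m hG2m hH2m key
    have eqF : ∫⁻ x, f x = ∫⁻ a, F2 a := by
      rw [transfer f hf, hF2]
      rw [show (volume : Measure (ℝ × (Fin n → ℝ))) = (volume : Measure ℝ).prod volume from MeasureTheory.Measure.volume_eq_prod _ _]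
      exact lintegral_prod F hFm.aemeasurable
    have eqG : ∫⁻ y, g y = ∫⁻ b, G2 b := by
      rw [transfer g hg, hG2]
      rw [show (volume : Measure (ℝ × (Fin n → ℝ))) = (volume : Measure ℝ).prod volume from MeasureTheory.Measure.volume_eq_prod _ _]
      exact lintegral_prod G hGm.aemeasurable
    have eqH : ∫⁻ z, h z = ∫⁻ d, H2 d := by
      rw [transfer h hh, hH2]
      rw [show (volume : Measure (ℝ × (Fin n → ℝ))) = (volume : Measure ℝ).prod volume from MeasureTheory.Measure.volume_eq_prod _ _]
      exact lintegral_prod H hHm.aemeasurable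
    rw [eqF, eqG, eqH]
    exact final

variable {n : ℕ}

local notation "E" => EuclideanSpace ℝ (Fin n)

-- PL on Euclidean space
lemma PL_euclid {f g h : EuclideanSpace ℝ (Fin n) → ℝ≥0∞}
    (hf : Measurable f) (hg : Measurable g) (hh : Measurable h)
    (hyp : ∀ x y, f x * g y ≤ (h ((1/2 : ℝ) • (x + y))) ^ 2) :
    (∫⁻ x, f x) * (∫⁻ y, g y) ≤ (∫⁻ z, h z) ^ 2 := by
  set e := (MeasurableEquiv.toLp 2 (Fin n → ℝ)).symm with he
  have hmp : MeasurePreserving e volume volume :=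
    EuclideanSpace.volume_preserving_symm_measurableEquiv_toLp (Fin n)
  have transfer : ∀ (φ : EuclideanSpace ℝ (Fin n) → ℝ≥0∞), Measurable φ →
      ∫⁻ x, φ x = ∫⁻ y : Fin n → ℝ, φ (e.symm y) := fun φ hφ =>
    ((hmp.symm e).lintegral_comp hφ).symm
  rw [transfer f hf, transfer g hg, transfer h hh]
  refine PLpi n (fun y => f (e.symm y)) (fun y => g (e.symm y)) (fun y => h (e.symm y))
    (hf.comp e.symm.measurable) (hg.comp e.symm.measurable) (hh.comp e.symm.measurable)
    (fun x y => ?_)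
  have hlin : e.symm ((1/2 : ℝ) • (x + y)) = (1/2 : ℝ) • (e.symm x + e.symm y) := rfl
  simp only [hlin]
  exact hyp (e.symm x) (e.symm y)

-- the Gaussian density
noncomputable def gphi (n : ℕ) : EuclideanSpace ℝ (Fin n) → ℝ≥0∞ :=
  fun x => ENNReal.ofReal ((2 * π) ^ (-(n : ℝ) / 2) * Real.exp (-‖x‖ ^ 2 / 2))

lemma gphi_meas : Measurable (gphi n) := by
  apply ENNReal.measurable_ofReal.comp
  exact (continuous_const.mul ((Real.continuous_exp.comp
    ((continuous_norm.pow 2).neg.div_const 2)))).measurable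

lemma gphi_neg (x : EuclideanSpace ℝ (Fin n)) : gphi n (-x) = gphi n x := by
  simp [gphi, norm_neg]

lemma two_pi_rpow_pos : (0:ℝ) < (2 * π) ^ (-(n : ℝ) / 2) :=
  rpow_pos_of_pos (by positivity) _

lemma gphi_midpoint (x y : EuclideanSpace ℝ (Fin n)) :
    gphi n x * gphi n y ≤ (gphi n ((1/2 : ℝ) • (x + y))) ^ 2 := by
  set c : ℝ := (2 * π) ^ (-(n : ℝ) / 2) with hcdef
  have hc : 0 < c := two_pi_rpow_pos
  have h1 : ‖(1/2 : ℝ) • (x + y)‖ ^ 2 = (1/4) * ‖x + y‖ ^ 2 := by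
    rw [norm_smul, Real.norm_eq_abs, abs_of_pos (by norm_num : (0:ℝ) < 1/2)]
    ring
  have hnorm : ‖(1/2 : ℝ) • (x + y)‖ ^ 2 ≤ (‖x‖ ^ 2 + ‖y‖ ^ 2) / 2 := by
    rw [h1]
    have h2 := norm_add_sq_real x y
    have h3 := real_inner_le_norm x y
    nlinarith [sq_nonneg (‖x‖ - ‖y‖)]
  rw [gphi, gphi, gphi, ← ENNReal.ofReal_mul (by positivity), ← ENNReal.ofReal_pow (by positivity)]
  apply ENNReal.ofReal_le_ofReal
  have hexp : Real.exp (-‖x‖ ^ 2 / 2) * Real.exp (-‖y‖ ^ 2 / 2)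
      ≤ Real.exp (-‖(1/2 : ℝ) • (x + y)‖ ^ 2 / 2) ^ 2 := by
    rw [pow_two (Real.exp (-‖(1/2 : ℝ) • (x + y)‖ ^ 2 / 2)), ← Real.exp_add, ← Real.exp_add]
    apply Real.exp_le_exp.2
    linarith [hnorm]
  calc c * Real.exp (-‖x‖ ^ 2 / 2) * (c * Real.exp (-‖y‖ ^ 2 / 2))
      = c ^ 2 * (Real.exp (-‖x‖ ^ 2 / 2) * Real.exp (-‖y‖ ^ 2 / 2)) := by ring
    _ ≤ c ^ 2 * Real.exp (-‖(1/2 : ℝ) • (x + y)‖ ^ 2 / 2) ^ 2 :=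
        mul_le_mul_of_nonneg_left hexp (by positivity)
    _ = (c * Real.exp (-‖(1/2 : ℝ) • (x + y)‖ ^ 2 / 2)) ^ 2 := by ring

lemma gphi_rot (u v : EuclideanSpace ℝ (Fin n)) :
    gphi n ((Real.sqrt 2)⁻¹ • (u + v)) * gphi n ((Real.sqrt 2)⁻¹ • (u - v))
      = gphi n u * gphi n v := by
  set s : ℝ := (Real.sqrt 2)⁻¹ with hs
  have hs2 : s ^ 2 = 1/2 := by
    rw [hs, inv_pow, sq_sqrt (by norm_num : (0:ℝ) ≤ 2)]; norm_num
  have hn1 : ‖s • (u + v)‖ ^ 2 = s ^ 2 * ‖u + v‖ ^ 2 := by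
    rw [norm_smul, mul_pow, Real.norm_eq_abs, sq_abs]
  have hn2 : ‖s • (u - v)‖ ^ 2 = s ^ 2 * ‖u - v‖ ^ 2 := by
    rw [norm_smul, mul_pow, Real.norm_eq_abs, sq_abs]
  have hpar : ‖u + v‖ ^ 2 + ‖u - v‖ ^ 2 = 2 * ‖u‖ ^ 2 + 2 * ‖v‖ ^ 2 := by
    have h1 := norm_add_sq_real u v
    have h2 := norm_sub_sq_real u v
    linarith
  simp only [gphi]
  rw [← ENNReal.ofReal_mul (by positivity), ← ENNReal.ofReal_mul (by positivity)]
  congr 1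
  have hexp : -‖s • (u + v)‖ ^ 2 / 2 + -‖s • (u - v)‖ ^ 2 / 2
      = -‖u‖ ^ 2 / 2 + -‖v‖ ^ 2 / 2 := by
    rw [hn1, hn2, hs2]
    linarith [hpar]
  calc (2 * π) ^ (-(n : ℝ) / 2) * Real.exp (-‖s • (u + v)‖ ^ 2 / 2) *
        ((2 * π) ^ (-(n : ℝ) / 2) * Real.exp (-‖s • (u - v)‖ ^ 2 / 2))
      = (2 * π) ^ (-(n : ℝ) / 2) * (2 * π) ^ (-(n : ℝ) / 2) *
        Real.exp (-‖s • (u + v)‖ ^ 2 / 2 + -‖s • (u - v)‖ ^ 2 / 2) := by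
        rw [Real.exp_add]; ring
    _ = (2 * π) ^ (-(n : ℝ) / 2) * (2 * π) ^ (-(n : ℝ) / 2) *
        Real.exp (-‖u‖ ^ 2 / 2 + -‖v‖ ^ 2 / 2) := by rw [hexp]
    _ = (2 * π) ^ (-(n : ℝ) / 2) * Real.exp (-‖u‖ ^ 2 / 2) *
        ((2 * π) ^ (-(n : ℝ) / 2) * Real.exp (-‖v‖ ^ 2 / 2)) := by
        rw [Real.exp_add]; ring

lemma gphi_sqrt2 (w : EuclideanSpace ℝ (Fin n)) :
    gphi n ((Real.sqrt 2) • w) ≤ gphi n w := by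
  have hn : ‖(Real.sqrt 2) • w‖ ^ 2 = 2 * ‖w‖ ^ 2 := by
    rw [norm_smul, mul_pow, Real.norm_eq_abs, sq_abs, sq_sqrt (by norm_num : (0:ℝ) ≤ 2)]
  simp only [gphi]
  apply ENNReal.ofReal_le_ofReal
  apply mul_le_mul_of_nonneg_left _ (le_of_lt two_pi_rpow_pos)
  apply Real.exp_le_exp.2
  rw [hn]
  nlinarith [sq_nonneg ‖w‖]


lemma gphi_mass : ∫⁻ x : EuclideanSpace ℝ (Fin n), gphi n x = 1 := by
  set e := (MeasurableEquiv.toLp 2 (Fin n → ℝ)).symm with he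
  have hmp : MeasurePreserving e volume volume :=
    EuclideanSpace.volume_preserving_symm_measurableEquiv_toLp (Fin n)
  have transfer : ∫⁻ x : EuclideanSpace ℝ (Fin n), gphi n x
      = ∫⁻ y : Fin n → ℝ, gphi n (e.symm y) := ((hmp.symm e).lintegral_comp gphi_meas).symm
  set c : ℝ := (2 * π) ^ (-(n : ℝ) / 2) with hcdef
  have hc : 0 < c := two_pi_rpow_pos
  set W : (Fin n → ℝ) → ℝ := fun y => c * ∏ i, Real.exp (-(1/2) * (y i) ^ 2) with hW
  have hWval : ∀ y : Fin n → ℝ, gphi n (e.symm y) = ENNReal.ofReal (W y) := by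
    intro y
    have hnorm : ‖(e.symm y : EuclideanSpace ℝ (Fin n))‖ ^ 2 = ∑ i, (y i) ^ 2 := by
      rw [EuclideanSpace.norm_eq, sq_sqrt (Finset.sum_nonneg fun i _ => sq_nonneg _)]
      refine Finset.sum_congr rfl fun i _ => ?_
      rw [Real.norm_eq_abs, sq_abs]
      rfl
    have hsum : -(∑ i, (y i) ^ 2) / 2 = ∑ i, -(1/2) * (y i) ^ 2 := by
      rw [← Finset.mul_sum]; ring
    rw [gphi, hnorm, ← hcdef, hsum, Real.exp_sum, hW]
  have hintprod : Integrable (fun y : Fin n → ℝ => ∏ i, Real.exp (-(1/2) * (y i) ^ 2)) :=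
    Integrable.fin_nat_prod (f := fun (i : Fin n) (t : ℝ) => Real.exp (-(1/2) * t ^ 2))
      (fun i => integrable_exp_neg_mul_sq (by norm_num : (0:ℝ) < 1/2))
  have hint : Integrable W := hintprod.const_mul c
  have hpos : 0 ≤ᵐ[(volume : Measure (Fin n → ℝ))] W :=
    Filter.Eventually.of_forall fun y => by positivity
  have hgauss : ∫ t : ℝ, Real.exp (-(1/2) * t ^ 2) = Real.sqrt (2 * π) := by
    rw [integral_gaussian]
    norm_num [div_div_eq_mul_div, mul_comm]
  have hcalc : ∫ y, W y = 1 := by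
    rw [hW, MeasureTheory.integral_const_mul, volume_pi,
      MeasureTheory.integral_fin_nat_prod_eq_prod (f := fun (i : Fin n) (t : ℝ) =>
        Real.exp (-(1/2) * t ^ 2))]
    simp_rw [hgauss]
    rw [Finset.prod_const, Finset.card_univ, Fintype.card_fin]
    have hpow : (Real.sqrt (2 * π)) ^ n = (2 * π) ^ ((n : ℝ) / 2) := by
      rw [Real.sqrt_eq_rpow, ← Real.rpow_natCast ((2 * π) ^ ((1:ℝ)/2)) n,
        ← Real.rpow_mul (by positivity)]
      congr 1
      ring
    rw [hpow, hcdef, ← Real.rpow_add (by positivity)]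
    rw [show -(n:ℝ)/2 + (n:ℝ)/2 = 0 by ring, Real.rpow_zero]
  rw [transfer]
  calc ∫⁻ y, gphi n (e.symm y) = ∫⁻ y, ENNReal.ofReal (W y) := by simp_rw [hWval]
    _ = ENNReal.ofReal (∫ y, W y) := (ofReal_integral_eq_lintegral_ofReal hint hpos).symm
    _ = 1 := by rw [hcalc]; simp

section Rotation

variable (n)

noncomputable def rotR : (EuclideanSpace ℝ (Fin n) × EuclideanSpace ℝ (Fin n)) →ₗ[ℝ]
    (EuclideanSpace ℝ (Fin n) × EuclideanSpace ℝ (Fin n)) :=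
  LinearMap.prod
    ((Real.sqrt 2)⁻¹ • ((LinearMap.fst ℝ _ _) + (LinearMap.snd ℝ _ _)))
    ((Real.sqrt 2)⁻¹ • ((LinearMap.fst ℝ _ _) - (LinearMap.snd ℝ _ _)))

lemma rotR_apply (p : EuclideanSpace ℝ (Fin n) × EuclideanSpace ℝ (Fin n)) :
    rotR n p = ((Real.sqrt 2)⁻¹ • (p.1 + p.2), (Real.sqrt 2)⁻¹ • (p.1 - p.2)) := rfl

lemma rotR_invol (p : EuclideanSpace ℝ (Fin n) × EuclideanSpace ℝ (Fin n)) :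
    rotR n (rotR n p) = p := by
  have hss : (Real.sqrt 2)⁻¹ * (Real.sqrt 2)⁻¹ = 1/2 := by
    rw [← mul_inv]
    rw [Real.mul_self_sqrt (by norm_num : (0:ℝ) ≤ 2)]
    norm_num
  rw [rotR_apply, rotR_apply]
  ext : 1 <;> simp only [smul_add, smul_sub, smul_smul, hss] <;> module

lemma rotR_det_ne : LinearMap.det (rotR n) ≠ 0 := by
  have hcomp : (rotR n) ∘ₗ (rotR n) = LinearMap.id := LinearMap.ext (rotR_invol n)
  have h1 : LinearMap.det (rotR n) * LinearMap.det (rotR n) = 1 := by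
    rw [← LinearMap.det_comp, hcomp, LinearMap.det_id]
  intro hc
  rw [hc, mul_zero] at h1
  exact zero_ne_one h1

lemma rotR_det_abs : |LinearMap.det (rotR n)| = 1 := by
  have hcomp : (rotR n) ∘ₗ (rotR n) = LinearMap.id := LinearMap.ext (rotR_invol n)
  have h1 : LinearMap.det (rotR n) * LinearMap.det (rotR n) = 1 := by
    rw [← LinearMap.det_comp, hcomp, LinearMap.det_id]
  rcases mul_self_eq_one_iff.1 h1 with h | h <;> rw [h] <;> norm_num

instance : (volume : Measure (EuclideanSpace ℝ (Fin n) × EuclideanSpace ℝ (Fin n))).IsAddHaarMeasure := by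
  rw [MeasureTheory.Measure.volume_eq_prod]
  exact Measure.prod.instIsAddHaarMeasure
    (volume : Measure (EuclideanSpace ℝ (Fin n))) (volume : Measure (EuclideanSpace ℝ (Fin n)))

lemma rotR_measurable : Measurable (rotR n) :=
  (rotR n).continuous_of_finiteDimensional.measurable

lemma rotR_mp : MeasurePreserving (rotR n) volume volume := by
  refine ⟨rotR_measurable n, ?_⟩
  apply Measure.ext
  intro s hs
  rw [Measure.map_apply (rotR_measurable n) hs]
  rw [Measure.addHaar_preimage_linearMap volume (rotR_det_ne n) s]
  rw [abs_inv, rotR_det_abs]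
  simp

-- scaling
lemma sqrt2_smul_lintegral (F : EuclideanSpace ℝ (Fin n) → ℝ≥0∞) (hF : Measurable F) :
    ∫⁻ x, F x = ENNReal.ofReal ((Real.sqrt 2) ^ n) * ∫⁻ w, F ((Real.sqrt 2) • w) := by
  set M : EuclideanSpace ℝ (Fin n) →ₗ[ℝ] EuclideanSpace ℝ (Fin n) :=
    (Real.sqrt 2) • (LinearMap.id) with hM
  have hMdet : LinearMap.det M = (Real.sqrt 2) ^ n := by
    rw [hM, LinearMap.det_smul, LinearMap.det_id, finrank_euclideanSpace_fin, mul_one]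
  have hMdet_ne : LinearMap.det M ≠ 0 := by
    rw [hMdet]
    positivity
  have hMmeas : Measurable M := M.continuous_of_finiteDimensional.measurable
  have hmap : Measure.map M volume = (ENNReal.ofReal ((Real.sqrt 2) ^ n))⁻¹ • volume := by
    apply Measure.ext
    intro s hs
    rw [Measure.map_apply hMmeas hs, Measure.addHaar_preimage_linearMap volume hMdet_ne s,
      Measure.smul_apply, smul_eq_mul, hMdet, abs_of_pos (by positivity),
      ← ENNReal.ofReal_inv_of_pos (by positivity)]
  have hsub : ∫⁻ w, F ((Real.sqrt 2) • w) = ∫⁻ x, F x ∂(Measure.map M volume) := by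
    rw [lintegral_map hF hMmeas]
    rfl
  rw [hsub, hmap, lintegral_smul_measure]
  rw [smul_eq_mul, ← mul_assoc, ENNReal.mul_inv_cancel (by positivity) ENNReal.ofReal_ne_top, one_mul]

end Rotation

theorem stmt_2 (n : ℕ) (A B : Set (EuclideanSpace ℝ (Fin n)))
    (hAcl : IsClosed A) (hAco : Convex ℝ A) (hAsym : ∀ x ∈ A, -x ∈ A)
    (hBcl : IsClosed B) (hBco : Convex ℝ B) (hBsym : ∀ x ∈ B, -x ∈ B) :
    stdGaussian n A * stdGaussian n B ≤
      ENNReal.ofReal (2 ^ ((n : ℝ) / 2)) * stdGaussian n (A ∩ B) := by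
  classical
  set s : ℝ := (Real.sqrt 2)⁻¹ with hs
  have hsqrt2 : (0:ℝ) < Real.sqrt 2 := by positivity
  have hspos : 0 < s := by rw [hs]; positivity
  have hstd : ∀ S : Set (EuclideanSpace ℝ (Fin n)), MeasurableSet S →
      stdGaussian n S = ∫⁻ x, S.indicator (gphi n) x := by
    intro S hS
    rw [stdGaussian, withDensity_apply _ hS, ← lintegral_indicator hS]
    rfl
  have hAm : MeasurableSet A := hAcl.measurableSet
  have hBm : MeasurableSet B := hBcl.measurableSet
  have hABm : MeasurableSet (A ∩ B) := (hAcl.inter hBcl).measurableSet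
  set C : Set (EuclideanSpace ℝ (Fin n) × EuclideanSpace ℝ (Fin n)) :=
    (rotR n) ⁻¹' (A ×ˢ B) with hC
  have hCclosed : IsClosed C :=
    (hAcl.prod hBcl).preimage (rotR n).continuous_of_finiteDimensional
  have hCm : MeasurableSet C := hCclosed.measurableSet
  set C0 : Set (EuclideanSpace ℝ (Fin n)) := (fun w => s • w) ⁻¹' (A ∩ B) with hC0
  have hC0m : MeasurableSet C0 :=
    ((hAcl.inter hBcl).preimage (continuous_const_smul s)).measurableSet
  set I0 : ℝ≥0∞ := ∫⁻ w, C0.indicator (gphi n) w with hI0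
  -- step 1 : product and rotation
  have step1 : stdGaussian n A * stdGaussian n B
      = ∫⁻ p : EuclideanSpace ℝ (Fin n) × EuclideanSpace ℝ (Fin n),
          C.indicator (fun q => gphi n q.1 * gphi n q.2) p := by
    rw [hstd A hAm, hstd B hBm]
    have h1 : (∫⁻ x, A.indicator (gphi n) x) * (∫⁻ y, B.indicator (gphi n) y)
        = ∫⁻ p : EuclideanSpace ℝ (Fin n) × EuclideanSpace ℝ (Fin n),
            (A.indicator (gphi n) p.1) * (B.indicator (gphi n) p.2) := by
      rw [MeasureTheory.Measure.volume_eq_prod]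
      exact (lintegral_prod_mul (gphi_meas.indicator hAm).aemeasurable
        (gphi_meas.indicator hBm).aemeasurable).symm
    have hJm : Measurable (fun q : EuclideanSpace ℝ (Fin n) × EuclideanSpace ℝ (Fin n) =>
        A.indicator (gphi n) q.1 * B.indicator (gphi n) q.2) :=
      ((gphi_meas.indicator hAm).comp measurable_fst).mul
        ((gphi_meas.indicator hBm).comp measurable_snd)
    have h2 := (rotR_mp n).lintegral_comp hJm
    rw [h1, ← h2]
    apply lintegral_congr
    intro p
    by_cases hp : p ∈ C
    · have hmem : rotR n p ∈ A ×ˢ B := hp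
      rw [indicator_of_mem hp, indicator_of_mem hmem.1, indicator_of_mem hmem.2]
      have := gphi_rot p.1 p.2
      rw [rotR_apply]
      exact this
    · rw [indicator_of_notMem hp]
      have hnp : ¬(rotR n p ∈ A ×ˢ B) := hp
      rw [Set.mem_prod, not_and_or] at hnp
      rcases hnp with h | h
      · rw [indicator_of_notMem h, zero_mul]
      · rw [indicator_of_notMem h, mul_zero]
  -- step 2 : Fubini
  have hCindm : Measurable (C.indicator
      (fun q : EuclideanSpace ℝ (Fin n) × EuclideanSpace ℝ (Fin n) => gphi n q.1 * gphi n q.2)) :=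
    ((gphi_meas.comp measurable_fst).mul (gphi_meas.comp measurable_snd)).indicator hCm
  have step2 : ∫⁻ p : EuclideanSpace ℝ (Fin n) × EuclideanSpace ℝ (Fin n),
      C.indicator (fun q => gphi n q.1 * gphi n q.2) p
      = ∫⁻ v, (∫⁻ u, ({u | (u, v) ∈ C}.indicator (gphi n)) u) * gphi n v := by
    rw [MeasureTheory.Measure.volume_eq_prod, lintegral_prod_symm _ hCindm.aemeasurable]
    apply lintegral_congr
    intro v
    have hpt : ∀ u, C.indicator (fun q => gphi n q.1 * gphi n q.2) (u, v)
        = ({u | (u, v) ∈ C}.indicator (gphi n) u) * gphi n v := by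
      intro u
      by_cases hu : (u, v) ∈ C
      · rw [indicator_of_mem hu, indicator_of_mem (show u ∈ {u | (u, v) ∈ C} from hu)]
      · rw [indicator_of_notMem hu,
          indicator_of_notMem (show u ∉ {u | (u, v) ∈ C} from hu), zero_mul]
    rw [lintegral_congr hpt]
    exact lintegral_mul_const _ (gphi_meas.indicator (measurable_prodMk_right hCm))
  -- step 3 : pointwise inner bound via PL
  have step3 : ∀ v : EuclideanSpace ℝ (Fin n),
      (∫⁻ u, ({u | (u, v) ∈ C}.indicator (gphi n)) u) ≤ I0 := by
    intro v
    set Sv : Set (EuclideanSpace ℝ (Fin n)) := {u | (u, v) ∈ C} with hSv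
    have hSvm : MeasurableSet Sv := measurable_prodMk_right hCm
    set Tv : Set (EuclideanSpace ℝ (Fin n)) := {y | -y ∈ Sv} with hTv
    have hTvm : MeasurableSet Tv := measurable_neg hSvm
    have hneg_int : ∫⁻ y, Tv.indicator (gphi n) y = ∫⁻ u, Sv.indicator (gphi n) u := by
      have hmp : MeasurePreserving (fun y : EuclideanSpace ℝ (Fin n) => -y) volume volume :=
        Measure.measurePreserving_neg volume
      rw [← hmp.lintegral_comp (gphi_meas.indicator hSvm)]
      apply lintegral_congr
      intro y
      by_cases hy : -y ∈ Sv
      · rw [indicator_of_mem hy, indicator_of_mem (show y ∈ Tv from hy), gphi_neg]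
      · rw [indicator_of_notMem hy, indicator_of_notMem (show y ∉ Tv from hy)]
    have hmidmem : ∀ x ∈ Sv, ∀ y ∈ Tv, (1/2 : ℝ) • (x + y) ∈ C0 := by
      intro x hx y hy
      have hx' : s • (x + v) ∈ A ∧ s • (x - v) ∈ B := by
        have hmem : rotR n (x, v) ∈ A ×ˢ B := hx
        rw [rotR_apply] at hmem
        exact ⟨hmem.1, hmem.2⟩
      have hy' : s • (-y + v) ∈ A ∧ s • (-y - v) ∈ B := by
        have hmem : rotR n (-y, v) ∈ A ×ˢ B := hy
        rw [rotR_apply] at hmem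
        exact ⟨hmem.1, hmem.2⟩
      have hyA : s • (y - v) ∈ A := by
        have h1 := hAsym _ hy'.1
        have h2 : -(s • (-y + v)) = s • (y - v) := by
          rw [← smul_neg]
          congr 1
          abel
        rwa [h2] at h1
      have hyB : s • (y + v) ∈ B := by
        have h1 := hBsym _ hy'.2
        have h2 : -(s • (-y - v)) = s • (y + v) := by
          rw [← smul_neg]
          congr 1
          abel
        rwa [h2] at h1
      have hA2 : (1/2 : ℝ) • (s • (x + v)) + (1/2 : ℝ) • (s • (y - v)) ∈ A :=
        hAco hx'.1 hyA (by norm_num) (by norm_num) (by norm_num)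
      have hB2 : (1/2 : ℝ) • (s • (x - v)) + (1/2 : ℝ) • (s • (y + v)) ∈ B :=
        hBco hx'.2 hyB (by norm_num) (by norm_num) (by norm_num)
      have heqA : (1/2 : ℝ) • (s • (x + v)) + (1/2 : ℝ) • (s • (y - v))
          = s • ((1/2 : ℝ) • (x + y)) := by
        rw [smul_smul, smul_smul, smul_smul]
        module
      have heqB : (1/2 : ℝ) • (s • (x - v)) + (1/2 : ℝ) • (s • (y + v))
          = s • ((1/2 : ℝ) • (x + y)) := by
        rw [smul_smul, smul_smul, smul_smul]
        module
      rw [heqA] at hA2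
      rw [heqB] at hB2
      exact ⟨hA2, hB2⟩
    -- PL application
    have hhyp : ∀ x y, Sv.indicator (gphi n) x * Tv.indicator (gphi n) y
        ≤ (C0.indicator (gphi n) ((1/2 : ℝ) • (x + y))) ^ 2 := by
      intro x y
      by_cases hx : x ∈ Sv
      · by_cases hy : y ∈ Tv
        · rw [indicator_of_mem hx, indicator_of_mem hy,
            indicator_of_mem (hmidmem x hx y hy)]
          exact gphi_midpoint x y
        · rw [indicator_of_notMem hy, mul_zero]
          exact zero_le
      · rw [indicator_of_notMem hx, zero_mul]
        exact zero_le
    have hPL := PL_euclid (gphi_meas.indicator hSvm) (gphi_meas.indicator hTvm)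
      (gphi_meas.indicator hC0m) hhyp
    rw [hneg_int] at hPL
    have hsq : (∫⁻ u, Sv.indicator (gphi n) u) ^ 2 ≤ I0 ^ 2 := by
      calc (∫⁻ u, Sv.indicator (gphi n) u) ^ 2
          = (∫⁻ x, Sv.indicator (gphi n) x) * ∫⁻ u, Sv.indicator (gphi n) u := by rw [sq]
        _ ≤ (∫⁻ z, C0.indicator (gphi n) z) ^ 2 := hPL
        _ = I0 ^ 2 := rfl
    by_contra hcon
    push_neg at hcon
    exact absurd hsq (not_le.2 (ENNReal.pow_lt_pow_left (by norm_num) hcon))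
  -- step 4 : outer integral
  have step4 : ∫⁻ v, (∫⁻ u, ({u | (u, v) ∈ C}.indicator (gphi n)) u) * gphi n v ≤ I0 := by
    calc ∫⁻ v, (∫⁻ u, ({u | (u, v) ∈ C}.indicator (gphi n)) u) * gphi n v
        ≤ ∫⁻ v, I0 * gphi n v := lintegral_mono fun v => mul_le_mul_left (step3 v) _
      _ = I0 * ∫⁻ v, gphi n v := lintegral_const_mul I0 gphi_meas
      _ = I0 := by rw [gphi_mass, mul_one]
  -- step 5 : scaling
  have step5 : I0 ≤ ENNReal.ofReal ((Real.sqrt 2) ^ n) * stdGaussian n (A ∩ B) := by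
    rw [hI0, sqrt2_smul_lintegral n (C0.indicator (gphi n)) (gphi_meas.indicator hC0m),
      hstd (A ∩ B) hABm]
    apply mul_le_mul_right
    apply lintegral_mono
    intro w
    show C0.indicator (gphi n) ((Real.sqrt 2) • w) ≤ (A ∩ B).indicator (gphi n) w
    by_cases hw : w ∈ A ∩ B
    · have hmem : (Real.sqrt 2) • w ∈ C0 := by
        have : s • ((Real.sqrt 2) • w) = w := by
          rw [smul_smul, hs, inv_mul_cancel₀ (ne_of_gt hsqrt2), one_smul]
        rw [hC0]
        simp only [Set.mem_preimage, this]
        exact hw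
      rw [indicator_of_mem hmem, indicator_of_mem hw]
      exact gphi_sqrt2 w
    · have hmem : (Real.sqrt 2) • w ∉ C0 := by
        have heq : s • ((Real.sqrt 2) • w) = w := by
          rw [smul_smul, hs, inv_mul_cancel₀ (ne_of_gt hsqrt2), one_smul]
        rw [hC0]
        simp only [Set.mem_preimage, heq]
        exact hw
      rw [indicator_of_notMem hmem]
      exact zero_le
  -- constant
  have hconst : ENNReal.ofReal ((Real.sqrt 2) ^ n) = ENNReal.ofReal (2 ^ ((n : ℝ) / 2)) := by
    congr 1
    rw [Real.sqrt_eq_rpow, ← Real.rpow_natCast ((2:ℝ) ^ ((1:ℝ)/2)) n,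
      ← Real.rpow_mul (by norm_num)]
    congr 1
    ring
  calc stdGaussian n A * stdGaussian n B
      = ∫⁻ v, (∫⁻ u, ({u | (u, v) ∈ C}.indicator (gphi n)) u) * gphi n v := by
        rw [step1, step2]
    _ ≤ I0 := step4
    _ ≤ ENNReal.ofReal ((Real.sqrt 2) ^ n) * stdGaussian n (A ∩ B) := step5
    _ = ENNReal.ofReal (2 ^ ((n : ℝ) / 2)) * stdGaussian n (A ∩ B) := by rw [hconst]
end

section
/- Suppose there exists a sequence of positive numbers (cₙ) with lim_{n→∞} cₙ^{1/n} = 1 such that for all n and all closed, convex, origin-symmetric A, B ⊆ ℝⁿ we have μₙ(A∩B) ≥ cₙ·μₙ(A)·μₙ(B). Then for all n and all closed, convex, origin-symmetric A, B ⊆ ℝⁿ, μₙ(A∩B) ≥ μₙ(A)·μₙ(B). -/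
/-!
The Gaussian measure is a product measure. Splitting `ℝ^(N n)` into `N` blocks of `n`
coordinates, the set `A^N` of points all of whose blocks lie in `A` is again closed, convex and
origin-symmetric, `μ_{N n}(A^N) = μₙ(A)^N` and `(A ∩ B)^N = A^N ∩ B^N`. The hypothesis in
dimension `N n` therefore gives `c_{N n} (μₙ(A) μₙ(B))^N ≤ μₙ(A ∩ B)^N`; after taking `N`-th roots
the constant becomes `c_{N n}^{1/N} = (c_{N n}^{1/(N n)})^n → 1`.
-/

open MeasureTheory Real Pointwise
open Filter Topology
open scoped ENNReal

namespace MeasureTheory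

theorem lintegral_fin_prod_eq_prod {α : Type*} [MeasurableSpace α] (μ : Measure α)
    [SigmaFinite μ] {k : ℕ} (f : Fin k → α → ℝ≥0∞) (hf : ∀ i, Measurable (f i)) :
    ∫⁻ x, ∏ i, f i (x i) ∂(Measure.pi fun _ : Fin k => μ) = ∏ i, ∫⁻ t, f i t ∂μ := by
  induction k with
  | zero => simp
  | succ k ih =>
    rw [(measurePreserving_piFinSuccAbove (fun _ : Fin (k + 1) => μ) 0).symm.lintegral_map_equiv]
    simp_rw [MeasurableEquiv.piFinSuccAbove_symm_apply, Fin.insertNthEquiv, Fin.prod_univ_succ,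
      Fin.insertNth_zero]
    simp only [cast_eq, Fin.cons_zero, Fin.cons_succ, Equiv.coe_fn_mk]
    rw [lintegral_prod_mul (f := f 0) (g := fun y : Fin k → α => ∏ i : Fin k, f i.succ (y i))
      (hf 0).aemeasurable (Finset.measurable_prod _ fun i _ =>
        (hf i.succ).comp (measurable_pi_apply i)).aemeasurable, ih _ fun i => hf i.succ]

theorem Measure.pi_withDensity {α : Type*} [MeasurableSpace α] (μ : Measure α) [SigmaFinite μ]
    {f : α → ℝ≥0∞} (hf : Measurable f) [SigmaFinite (μ.withDensity f)] (k : ℕ) :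
    Measure.pi (fun _ : Fin k => μ.withDensity f) =
      (Measure.pi fun _ : Fin k => μ).withDensity fun x => ∏ i, f (x i) := by
  refine Measure.pi_eq fun s hs => ?_
  have hbox : (Set.univ.pi s).indicator (fun x : Fin k → α => ∏ i, f (x i)) =
      fun x => ∏ i, (s i).indicator f (x i) := by
    classical
    funext x
    simp [Set.indicator_apply, Finset.prod_ite_zero]
  rw [withDensity_apply _ (MeasurableSet.univ_pi hs),
    ← lintegral_indicator (MeasurableSet.univ_pi hs), hbox,
    lintegral_fin_prod_eq_prod μ _ fun i => hf.indicator (hs i)]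
  exact Finset.prod_congr rfl fun i _ => by
    rw [lintegral_indicator (hs i), withDensity_apply _ (hs i)]

theorem MeasurableEquiv.map_withDensity {α β : Type*} [MeasurableSpace α] [MeasurableSpace β]
    (μ : Measure α) (e : α ≃ᵐ β) {f : α → ℝ≥0∞} (hf : Measurable f) :
    (μ.withDensity f).map e = (μ.map e).withDensity (f ∘ e.symm) := by
  ext s hs
  rw [Measure.map_apply e.measurable hs, withDensity_apply _ (e.measurable hs),
    withDensity_apply _ hs, setLIntegral_map hs (hf.comp e.symm.measurable) e.measurable]
  exact setLIntegral_congr_fun (e.measurable hs) fun x _ => by simp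

theorem measurePreserving_curry {ι κ α : Type*} [Fintype ι] [Fintype κ] [MeasurableSpace α]
    (μ : ι × κ → Measure α) [∀ p, SigmaFinite (μ p)] :
    MeasurePreserving (MeasurableEquiv.curry ι κ α) (Measure.pi μ)
      (Measure.pi fun i => Measure.pi fun j => μ (i, j)) := by
  refine MeasurePreserving.symm (MeasurableEquiv.curry ι κ α).symm
    ⟨(MeasurableEquiv.curry ι κ α).symm.measurable, (Measure.pi_eq fun s hs => ?_).symm⟩
  have hbox : (MeasurableEquiv.curry ι κ α).symm ⁻¹' Set.univ.pi s =
      Set.univ.pi fun i => Set.univ.pi fun j => s (i, j) := by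
    ext x
    simp [MeasurableEquiv.coe_curry_symm, Prod.forall]
  rw [Measure.map_apply (MeasurableEquiv.measurable _) (MeasurableSet.univ_pi hs), hbox,
    Measure.pi_pi, Fintype.prod_prod_type]
  simp_rw [Measure.pi_pi]

end MeasureTheory

theorem ENNReal.le_of_forall_ofReal_mul_pow_le {a b : ℝ≥0∞} {c : ℕ → ℝ} (hc : ∀ N, 0 ≤ c N)
    (hlim : Tendsto (fun N : ℕ => c N ^ ((1 : ℝ) / N)) atTop (𝓝 1))
    (h : ∀ N, ENNReal.ofReal (c N) * b ^ N ≤ a ^ N) : b ≤ a := by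
  have hroot : ∀ N : ℕ, N ≠ 0 → ENNReal.ofReal (c N ^ ((1 : ℝ) / N)) * b ≤ a := by
    intro N hN
    have hpos : (0 : ℝ) ≤ 1 / N := by positivity
    calc ENNReal.ofReal (c N ^ ((1 : ℝ) / N)) * b
        = (ENNReal.ofReal (c N) * b ^ N) ^ ((1 : ℝ) / N) := by
          rw [ENNReal.mul_rpow_of_nonneg _ _ hpos, ENNReal.ofReal_rpow_of_nonneg (hc N) hpos,
            one_div, ENNReal.pow_rpow_inv_natCast hN]
      _ ≤ (a ^ N) ^ ((1 : ℝ) / N) := ENNReal.rpow_le_rpow (h N) hpos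
      _ = a := by rw [one_div, ENNReal.pow_rpow_inv_natCast hN]
  have hlim' : Tendsto (fun N : ℕ => ENNReal.ofReal (c N ^ ((1 : ℝ) / N)) * b) atTop (𝓝 b) := by
    simpa using ENNReal.Tendsto.mul_const (ENNReal.tendsto_ofReal hlim) (Or.inl (by simp))
  exact le_of_tendsto hlim' (eventually_atTop.2 ⟨1, fun N hN => hroot N (by omega)⟩)

theorem tendsto_rpow_one_div_comp_mul {c : ℕ → ℝ} (hc : ∀ k, 0 < c k)
    (hlim : Tendsto (fun k : ℕ => c k ^ ((1 : ℝ) / k)) atTop (𝓝 1)) (n : ℕ) :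
    Tendsto (fun N : ℕ => c (N * n) ^ ((1 : ℝ) / N)) atTop (𝓝 1) := by
  rcases Nat.eq_zero_or_pos n with rfl | hn
  · simpa using tendsto_const_nhds.rpow tendsto_one_div_atTop_nhds_zero_nat (Or.inl (hc 0).ne')
  have hpow := (hlim.comp (tendsto_id.atTop_mul_const' hn)).pow n
  rw [one_pow] at hpow
  refine hpow.congr' (eventually_atTop.2 ⟨1, fun N hN => ?_⟩)
  rw [Function.comp_apply, id, ← Real.rpow_natCast, ← Real.rpow_mul (hc _).le]
  congr 1
  push_cast
  field_simp

theorem ofReal_stdGaussian_density_eq_prod_gaussianPDF (k : ℕ) (y : Fin k → ℝ) :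
    ENNReal.ofReal ((2 * π) ^ (-(k : ℝ) / 2) * Real.exp (-‖WithLp.toLp 2 y‖ ^ 2 / 2)) =
      ∏ i, ProbabilityTheory.gaussianPDF 0 1 (y i) := by
  simp only [ProbabilityTheory.gaussianPDF, ProbabilityTheory.gaussianPDFReal]
  rw [← ENNReal.ofReal_prod_of_nonneg fun i _ => by positivity, Finset.prod_mul_distrib,
    ← Real.exp_sum, Finset.prod_const, Finset.card_univ, Fintype.card_fin,
    EuclideanSpace.real_norm_sq_eq]
  congr 2
  · rw [NNReal.coe_one, mul_one, Real.sqrt_eq_rpow, ← Real.rpow_neg (by positivity),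
      ← Real.rpow_natCast, ← Real.rpow_mul (by positivity)]
    ring_nf
  · simp [Finset.sum_div, neg_div]

theorem measurePreserving_stdGaussian_ofLp (k : ℕ) :
    MeasurePreserving (MeasurableEquiv.toLp 2 (Fin k → ℝ)).symm (stdGaussian k)
      (Measure.pi fun _ : Fin k => ProbabilityTheory.gaussianReal 0 1) := by
  refine ⟨MeasurableEquiv.measurable _, ?_⟩
  have hdens := ProbabilityTheory.gaussianReal_of_var_ne_zero 0 one_ne_zero
  have : IsProbabilityMeasure (volume.withDensity (ProbabilityTheory.gaussianPDF 0 1)) :=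
    hdens ▸ inferInstance
  rw [stdGaussian, MeasurableEquiv.map_withDensity _ _ (by fun_prop),
    (EuclideanSpace.volume_preserving_symm_measurableEquiv_toLp (Fin k)).map_eq, hdens,
    Measure.pi_withDensity _ (ProbabilityTheory.measurable_gaussianPDF 0 1), volume_pi]
  congr 1
  funext y
  exact ofReal_stdGaussian_density_eq_prod_gaussianPDF k y

instance isProbabilityMeasure_stdGaussian (k : ℕ) : IsProbabilityMeasure (stdGaussian k) := by
  constructor
  simpa using (measurePreserving_stdGaussian_ofLp k).measure_preimage
    MeasurableSet.univ.nullMeasurableSet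

def blocks (N n : ℕ) : EuclideanSpace ℝ (Fin (N * n)) →ₗ[ℝ] (Fin N → EuclideanSpace ℝ (Fin n)) where
  toFun x i := WithLp.toLp 2 fun j => x (finProdFinEquiv (i, j))
  map_add' _ _ := rfl
  map_smul' _ _ := rfl

theorem measurePreserving_blocks (N n : ℕ) :
    MeasurePreserving (blocks N n) (stdGaussian (N * n)) (Measure.pi fun _ => stdGaussian n) := by
  have h := (measurePreserving_pi _ _ fun _ => (measurePreserving_stdGaussian_ofLp n).symm).comp
    ((measurePreserving_curry _).comp
      ((measurePreserving_piCongrLeft (fun _ => ProbabilityTheory.gaussianReal 0 1)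
        finProdFinEquiv).symm.comp (measurePreserving_stdGaussian_ofLp (N * n))))
  convert h using 1
  ext x i j
  rfl

def blockPow {n : ℕ} (A : Set (EuclideanSpace ℝ (Fin n))) (N : ℕ) :
    Set (EuclideanSpace ℝ (Fin (N * n))) :=
  blocks N n ⁻¹' Set.univ.pi fun _ => A

section blockPow

variable {n : ℕ} {A : Set (EuclideanSpace ℝ (Fin n))}

theorem IsClosed.blockPow (hA : IsClosed A) (N : ℕ) : IsClosed (blockPow A N) :=
  (isClosed_set_pi fun _ _ => hA).preimage (blocks N n).continuous_of_finiteDimensional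

theorem Convex.blockPow (hA : Convex ℝ A) (N : ℕ) : Convex ℝ (blockPow A N) :=
  (convex_pi fun _ _ => hA).linear_preimage (blocks N n)

theorem neg_mem_blockPow (hA : ∀ x ∈ A, -x ∈ A) (N : ℕ) :
    ∀ x ∈ blockPow A N, -x ∈ blockPow A N := fun x hx i _ => by
  rw [map_neg]
  exact hA _ (hx i trivial)

theorem blockPow_inter (A B : Set (EuclideanSpace ℝ (Fin n))) (N : ℕ) :
    blockPow (A ∩ B) N = blockPow A N ∩ blockPow B N := by
  simp only [blockPow, Set.pi_inter_distrib, Set.preimage_inter]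

theorem stdGaussian_blockPow (hA : MeasurableSet A) (N : ℕ) :
    stdGaussian (N * n) (blockPow A N) = stdGaussian n A ^ N := by
  rw [blockPow, (measurePreserving_blocks N n).measure_preimage
    (MeasurableSet.univ_pi fun _ => hA).nullMeasurableSet, Measure.pi_pi, Finset.prod_const,
    Finset.card_univ, Fintype.card_fin]

end blockPow

theorem stmt_5 (c : ℕ → ℝ) (hc : ∀ n, 0 < c n)
    (hlim : Filter.Tendsto (fun n => (c n) ^ ((1 : ℝ) / n)) Filter.atTop (nhds 1))
    (H : ∀ (n : ℕ) (A B : Set (EuclideanSpace ℝ (Fin n))),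
      IsClosed A → Convex ℝ A → (∀ x ∈ A, -x ∈ A) →
      IsClosed B → Convex ℝ B → (∀ x ∈ B, -x ∈ B) →
      stdGaussian n (A ∩ B) ≥ ENNReal.ofReal (c n) * (stdGaussian n A * stdGaussian n B)) :
    ∀ (n : ℕ) (A B : Set (EuclideanSpace ℝ (Fin n))),
      IsClosed A → Convex ℝ A → (∀ x ∈ A, -x ∈ A) →
      IsClosed B → Convex ℝ B → (∀ x ∈ B, -x ∈ B) →
      stdGaussian n (A ∩ B) ≥ stdGaussian n A * stdGaussian n B := by
  intro n A B hAc hAcv hAs hBc hBcv hBs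
  refine ENNReal.le_of_forall_ofReal_mul_pow_le (c := fun N => c (N * n))
    (fun N => (hc _).le) (tendsto_rpow_one_div_comp_mul hc hlim n) fun N => ?_
  have h := H (N * n) (blockPow A N) (blockPow B N)
    (hAc.blockPow N) (hAcv.blockPow N) (neg_mem_blockPow hAs N)
    (hBc.blockPow N) (hBcv.blockPow N) (neg_mem_blockPow hBs N)
  rwa [← blockPow_inter, stdGaussian_blockPow hAc.measurableSet,
    stdGaussian_blockPow hBc.measurableSet, stdGaussian_blockPow (hAc.inter hBc).measurableSet,
    ← mul_pow] at h
end

section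
/- Let ν be a rotation-invariant probability measure on ℝⁿ and let A, B ⊆ ℝⁿ be measurable star-shaped sets with center 0, meaning for every θ ∈ S^{n-1} the set {r ≥ 0 : rθ ∈ A} is an interval containing 0 (and similarly for B). Then ∫_{O(n)} ν(A ∩ U(B)) dm(U) ≥ ν(A)·ν(B), where m is the Haar probability measure on the orthogonal group O(n). -/
/-!
Let `c_S(x) = m {U | x ∈ U S}` be the probability that a random rotation of `S` covers `x`.
Fubini together with the invariance of `ν` and of `m` turns `∫ ν(A ∩ U B) dm(U)` into
`∫ c_A c_B dν`, and gives `∫ c_S dν = ν(S)`. Since `O(n)` acts transitively on spheres, `c_S(x)`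
depends only on `|x|`, and for star-shaped `S` it is nonincreasing in `|x|`. Hence `c_A` and `c_B`
are similarly ordered, and Chebyshev's integral inequality yields
`∫ c_A c_B dν ≥ ∫ c_A dν · ∫ c_B dν = ν(A) ν(B)`.
-/

open MeasureTheory Real Pointwise

instance matMeas (n : ℕ) : MeasurableSpace (Matrix (Fin n) (Fin n) ℝ) :=
  show MeasurableSpace (Fin n → Fin n → ℝ) from inferInstance

open Set
open scoped ENNReal

section Chebyshev

variable {X : Type*} {f g : X → ℝ≥0∞}

lemma ENNReal.mul_add_mul_le_mul_add_mul {a b c d : ℝ≥0∞} (hab : a ≤ b) (hcd : c ≤ d) :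
    a * d + b * c ≤ a * c + b * d := by
  obtain ⟨e, rfl⟩ := exists_add_of_le hab
  obtain ⟨f, rfl⟩ := exists_add_of_le hcd
  calc a * (c + f) + (a + e) * c = a * c + a * f + e * c + a * c := by ring
    _ ≤ a * c + a * f + e * c + a * c + e * f := self_le_add_right _ _
    _ = a * c + (a + e) * (c + f) := by ring

lemma mul_add_mul_le_mul_add_mul_of_antitone_wrt {β : Type*} [LinearOrder β] {k : X → β}
    (hf : ∀ x y, k x ≤ k y → f y ≤ f x) (hg : ∀ x y, k x ≤ k y → g y ≤ g x) (x y : X) :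
    f x * g y + f y * g x ≤ f x * g x + f y * g y := by
  rcases le_total (k x) (k y) with h | h
  · calc f x * g y + f y * g x = f y * g x + f x * g y := add_comm _ _
      _ ≤ f y * g y + f x * g x := ENNReal.mul_add_mul_le_mul_add_mul (hf x y h) (hg x y h)
      _ = f x * g x + f y * g y := add_comm _ _
  · exact ENNReal.mul_add_mul_le_mul_add_mul (hf y x h) (hg y x h)

/-- Chebyshev's integral inequality for similarly ordered functions. -/
lemma lintegral_mul_lintegral_le [MeasurableSpace X] {μ : Measure X} (hf : Measurable f)
    (hg : Measurable g)
    (hfg : ∀ x y, f x * g y + f y * g x ≤ f x * g x + f y * g y) :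
    (∫⁻ x, f x ∂μ) * ∫⁻ x, g x ∂μ ≤ μ univ * ∫⁻ x, f x * g x ∂μ := by
  have hmixed : ∫⁻ x, ∫⁻ y, f x * g y + f y * g x ∂μ ∂μ =
      (∫⁻ x, f x ∂μ) * (∫⁻ x, g x ∂μ) + (∫⁻ x, f x ∂μ) * ∫⁻ x, g x ∂μ := by
    simp_rw [lintegral_add_left (hg.const_mul _), lintegral_const_mul _ hg,
      lintegral_mul_const _ hf]
    rw [lintegral_add_left (hf.mul_const _), lintegral_mul_const _ hf, lintegral_const_mul _ hg]
  have hdiag : ∫⁻ x, ∫⁻ y, f x * g x + f y * g y ∂μ ∂μ =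
      μ univ * (∫⁻ x, f x * g x ∂μ) + μ univ * ∫⁻ x, f x * g x ∂μ := by
    simp_rw [lintegral_add_left measurable_const, lintegral_const]
    rw [lintegral_add_right _ measurable_const, lintegral_const,
      lintegral_mul_const (f := fun x => f x * g x) _ (hf.mul hg)]
    ring
  have h : ∫⁻ x, ∫⁻ y, f x * g y + f y * g x ∂μ ∂μ ≤ ∫⁻ x, ∫⁻ y, f x * g x + f y * g y ∂μ ∂μ :=
    lintegral_mono fun x => lintegral_mono fun y => hfg x y
  rw [hmixed, hdiag] at h
  exact le_of_not_gt fun hlt => (ENNReal.add_lt_add hlt hlt).not_ge h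

end Chebyshev

section GroupAction

variable {G X : Type*} [Group G] [MulAction G X] [MeasurableSpace G] {m : Measure G} {S : Set X}

def coverage (m : Measure G) (S : Set X) (x : X) : ℝ≥0∞ := m {g | x ∈ g • S}

lemma coverage_smul [MeasurableMul G] [m.IsMulLeftInvariant] (h : G) (x : X) :
    coverage m S (h • x) = coverage m S x := by
  have : {g : G | h • x ∈ g • S} = (h⁻¹ * ·) ⁻¹' {g | x ∈ g • S} := by
    ext g
    simp [mem_smul_set_iff_inv_smul_mem, mul_smul]
  rw [coverage, this, measure_preimage_mul]
  rfl

lemma coverage_le_coverage_smul [AddCommGroup X] [Module ℝ X] [SMulCommClass G ℝ X]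
    (hS : StarConvex ℝ 0 S) {t : ℝ} (ht₀ : 0 ≤ t) (ht₁ : t ≤ 1) (x : X) :
    coverage m S x ≤ coverage m S (t • x) := by
  refine measure_mono fun g hg => ?_
  obtain ⟨s, hs, rfl⟩ := hg
  exact ⟨t • s, hS.smul_mem hs ht₀ ht₁, smul_comm _ _ _⟩

variable [MeasurableSpace X] [MeasurableInv G] [MeasurableSMul₂ G X] {ν : Measure X} {A B : Set X}

lemma measurableSet_setOf_mem_smul (hS : MeasurableSet S) :
    MeasurableSet {p : X × G | p.1 ∈ p.2 • S} := by
  simp only [mem_smul_set_iff_inv_smul_mem]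
  exact (measurable_snd.inv.smul measurable_fst) hS

lemma measurable_coverage [SFinite m] (hS : MeasurableSet S) : Measurable (coverage m S) :=
  measurable_measure_prodMk_left (measurableSet_setOf_mem_smul hS)

lemma lintegral_coverage [SFinite m] [SFinite ν] [SMulInvariantMeasure G X ν]
    (hS : MeasurableSet S) : ∫⁻ x, coverage m S x ∂ν = m univ * ν S := by
  have hE := measurableSet_setOf_mem_smul (G := G) hS
  calc ∫⁻ x, coverage m S x ∂ν = ν.prod m {p | p.1 ∈ p.2 • S} := (Measure.prod_apply hE).symm
    _ = ∫⁻ g, ν (g • S) ∂m := Measure.prod_apply_symm hE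
    _ = m univ * ν S := by simp_rw [measure_smul, lintegral_const, mul_comm]

lemma lintegral_measure_inter_smul [SFinite m] [SFinite ν]
    (hA : MeasurableSet A) (hB : MeasurableSet B) :
    ∫⁻ g, ν (A ∩ g • B) ∂m = ∫⁻ x in A, coverage m B x ∂ν := by
  have hE : MeasurableSet ({p : X × G | p.1 ∈ A} ∩ {p | p.1 ∈ p.2 • B}) :=
    (measurable_fst hA).inter (measurableSet_setOf_mem_smul hB)
  rw [← lintegral_indicator hA]
  calc ∫⁻ g, ν (A ∩ g • B) ∂m = ν.prod m ({p | p.1 ∈ A} ∩ {p | p.1 ∈ p.2 • B}) :=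
        (Measure.prod_apply_symm hE).symm
    _ = _ := Measure.prod_apply hE
    _ = _ := lintegral_congr fun x => by by_cases hx : x ∈ A <;> simp [hx, coverage]

lemma setLIntegral_eq_lintegral_coverage_mul [SFinite m] [SFinite ν] [SMulInvariantMeasure G X ν]
    {f : X → ℝ≥0∞} (hf : Measurable f) (hf_inv : ∀ (g : G) x, f (g • x) = f x)
    (hA : MeasurableSet A) :
    m univ * ∫⁻ x in A, f x ∂ν = ∫⁻ x, coverage m A x * f x ∂ν := by
  have hE := measurableSet_setOf_mem_smul (G := G) hA
  have htranslate : ∀ g : G, ∫⁻ x in g • A, f x ∂ν = ∫⁻ x in A, f x ∂ν := fun g => by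
    rw [← image_smul, ← (measurePreserving_smul g ν).setLIntegral_comp_emb
      (measurableEmbedding_const_smul g)]
    simp_rw [hf_inv]
  calc m univ * ∫⁻ x in A, f x ∂ν = ∫⁻ g, ∫⁻ x in g • A, f x ∂ν ∂m := by
        simp_rw [htranslate, lintegral_const, mul_comm]
    _ = ∫⁻ g, ∫⁻ x, {p : X × G | p.1 ∈ p.2 • A}.indicator (fun p => f p.1) (x, g) ∂ν ∂m := by
        simp_rw [← lintegral_indicator (hA.const_smul _)]
        rfl
    _ = ∫⁻ x, ∫⁻ g, {p : X × G | p.1 ∈ p.2 • A}.indicator (fun p => f p.1) (x, g) ∂m ∂ν :=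
        lintegral_lintegral_swap (((hf.comp measurable_fst).indicator hE).comp
          measurable_swap).aemeasurable
    _ = ∫⁻ x, coverage m A x * f x ∂ν := lintegral_congr fun x => by
        rw [mul_comm]
        exact lintegral_indicator_const (measurable_prodMk_left hE) (f x)

lemma lintegral_measure_inter_smul_eq_lintegral_coverage_mul [MeasurableMul G]
    [m.IsMulLeftInvariant] [IsProbabilityMeasure m] [SFinite ν] [SMulInvariantMeasure G X ν]
    (hA : MeasurableSet A) (hB : MeasurableSet B) :
    ∫⁻ g, ν (A ∩ g • B) ∂m = ∫⁻ x, coverage m A x * coverage m B x ∂ν := by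
  rw [lintegral_measure_inter_smul hA hB, ← setLIntegral_eq_lintegral_coverage_mul
    (measurable_coverage hB) coverage_smul hA, measure_univ, one_mul]

end GroupAction

section OrthogonalGroup

variable {n : ℕ}

instance : BorelSpace (Matrix (Fin n) (Fin n) ℝ) := Pi.borelSpace

instance : ContinuousSMul (Matrix.orthogonalGroup (Fin n) ℝ) (Fin n → ℝ) :=
  ⟨(continuous_subtype_val.comp continuous_fst).matrix_mulVec continuous_snd⟩

lemma smulInvariantMeasure_of_map_mulVec_eq {ν : Measure (Fin n → ℝ)}
    (hrot : ∀ U ∈ Matrix.orthogonalGroup (Fin n) ℝ, ν.map (Matrix.mulVec U) = ν) :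
    SMulInvariantMeasure (Matrix.orthogonalGroup (Fin n) ℝ) (Fin n → ℝ) ν :=
  ⟨fun U s hs => by
    rw [← Measure.map_apply (measurable_const_smul U) hs]
    exact congrArg (· s) (hrot U U.2)⟩

lemma exists_orthogonalGroup_smul_eq {x y : Fin n → ℝ}
    (h : ‖WithLp.toLp 2 x‖ = ‖WithLp.toLp 2 y‖) :
    ∃ U : Matrix.orthogonalGroup (Fin n) ℝ, U • x = y := by
  set f := Submodule.reflection (ℝ ∙ (WithLp.toLp 2 x - WithLp.toLp 2 y))ᗮ
  set b := EuclideanSpace.basisFun (Fin n) ℝ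
  refine ⟨⟨_, f.toMatrix_mem_unitaryGroup b b⟩, ?_⟩
  have := LinearMap.toMatrix_mulVec_repr b.toBasis b.toBasis f.toLinearMap (WithLp.toLp 2 x)
  rwa [LinearEquiv.coe_coe, LinearIsometryEquiv.coe_toLinearEquiv,
    Submodule.reflection_sub h] at this

lemma coverage_le_of_norm_le {m : Measure (Matrix.orthogonalGroup (Fin n) ℝ)}
    [m.IsMulLeftInvariant] {S : Set (Fin n → ℝ)} (hS : StarConvex ℝ 0 S) {x y : Fin n → ℝ}
    (h : ‖WithLp.toLp 2 y‖ ≤ ‖WithLp.toLp 2 x‖) : coverage m S x ≤ coverage m S y := by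
  -- if `x = 0` then `t = 0` by the convention `a / 0 = 0`, and `y = 0` as well
  set t := ‖WithLp.toLp 2 y‖ / ‖WithLp.toLp 2 x‖
  have ht : ‖WithLp.toLp 2 (t • x)‖ = ‖WithLp.toLp 2 y‖ := by
    rw [WithLp.toLp_smul, norm_smul, Real.norm_of_nonneg (by positivity)]
    exact div_mul_cancel_of_imp fun hx => le_antisymm (hx ▸ h) (norm_nonneg _)
  obtain ⟨U, hU⟩ := exists_orthogonalGroup_smul_eq ht
  calc coverage m S x ≤ coverage m S (t • x) :=
        coverage_le_coverage_smul hS (by positivity) (div_le_one_of_le₀ h (norm_nonneg _)) x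
    _ = coverage m S y := by rw [← hU, coverage_smul]

end OrthogonalGroup

theorem stmt_6 (n : ℕ) (ν : Measure (Fin n → ℝ)) [IsProbabilityMeasure ν]
    (hrot : ∀ U ∈ Matrix.orthogonalGroup (Fin n) ℝ, ν.map (Matrix.mulVec U) = ν)
    (A B : Set (Fin n → ℝ)) (hA : MeasurableSet A) (hB : MeasurableSet B)
    (hAstar : ∀ x ∈ A, ∀ t ∈ Set.Icc (0 : ℝ) 1, t • x ∈ A)
    (hBstar : ∀ x ∈ B, ∀ t ∈ Set.Icc (0 : ℝ) 1, t • x ∈ B)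
    (m : Measure (Matrix.orthogonalGroup (Fin n) ℝ)) [IsProbabilityMeasure m]
    (hm : ∀ V : Matrix.orthogonalGroup (Fin n) ℝ, m.map (fun U => V * U) = m) :
    (∫⁻ U : Matrix.orthogonalGroup (Fin n) ℝ,
        ν (A ∩ Matrix.mulVec (U : Matrix (Fin n) (Fin n) ℝ) '' B) ∂m) ≥ ν A * ν B := by
  have := smulInvariantMeasure_of_map_mulVec_eq hrot
  have : m.IsMulLeftInvariant := ⟨hm⟩
  have hAc : StarConvex ℝ 0 A := starConvex_zero_iff.2 fun x hx t h₀ h₁ => hAstar x hx t ⟨h₀, h₁⟩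
  have hBc : StarConvex ℝ 0 B := starConvex_zero_iff.2 fun x hx t h₀ h₁ => hBstar x hx t ⟨h₀, h₁⟩
  have hsimilar := mul_add_mul_le_mul_add_mul_of_antitone_wrt
    (k := fun x => ‖WithLp.toLp 2 x‖) (fun _ _ => coverage_le_of_norm_le (m := m) hAc)
    (fun _ _ => coverage_le_of_norm_le (m := m) hBc)
  calc ∫⁻ U, ν (A ∩ Matrix.mulVec (U : Matrix (Fin n) (Fin n) ℝ) '' B) ∂m
      = ∫⁻ x, coverage m A x * coverage m B x ∂ν :=
        lintegral_measure_inter_smul_eq_lintegral_coverage_mul hA hB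
    _ ≥ (∫⁻ x, coverage m A x ∂ν) * ∫⁻ x, coverage m B x ∂ν := by
        simpa using lintegral_mul_lintegral_le (μ := ν) (measurable_coverage hA)
          (measurable_coverage hB) hsimilar
    _ = ν A * ν B := by
        rw [lintegral_coverage hA, lintegral_coverage hB, measure_univ, one_mul, one_mul]
end
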